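/- Let p be prime and α > 1. For every positive integer N there is a constant C_N > 0 such that 0 ≤ 1 - g^1(x)/g^1(0) ≤ C_N |x|_p^{α-1} for all x ∈ Q_p with |x|_p ≤ p^N, where g^1(x) = ∫_{Q_p} χ(-xξ)/(1 + |ξ|_p^α) dμ(ξ). -/

import Mathlib

/-!
Write `k ξ = (1 + ‖ξ‖ ^ α)⁻¹`, so that `g 0 - g x = ∫ (1 - Re χ(-xξ)) k ξ dμ ≥ 0` because
`|χ| = 1`. If `‖x‖ = p ^ (-m)`, then `χ(-xξ) = 1` on the ball `‖ξ‖ ≤ p ^ m`, and outside it the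
integrand is at most `2 ‖ξ‖ ^ (-α)`. The sphere of radius `p ^ j` has measure at most `p ^ j`,
because a ball of radius `p ^ (n + 1)` is the disjoint union of `p` translates of the ball of
radius `p ^ n`; summing over the spheres `j > m` gives a geometric series bounded by a constant
times `(p ^ m) ^ (1 - α) = ‖x‖ ^ (α - 1)`.
-/

open MeasureTheory Metric Set
open scoped ENNReal

lemma one_add_rpow_inv_le_rpow_neg {t : ℝ} (ht : 0 < t) (α : ℝ) : (1 + t ^ α)⁻¹ ≤ t ^ (-α) := by
  rw [Real.rpow_neg ht.le]
  exact inv_anti₀ (Real.rpow_pos_of_pos ht α) (le_add_of_nonneg_left zero_le_one)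

namespace Padic

variable {p : ℕ} [hp : Fact p.Prime]

lemma norm_natCast_sub_natCast_eq_one {i j : ℕ} (hi : i < p) (hj : j < p) (hij : i ≠ j) :
    ‖(i : ℚ_[p]) - j‖ = 1 := by
  have hcast : (i : ℚ_[p]) - j = ((i - j : ℤ) : ℚ_[p]) := by push_cast; ring
  rw [hcast]
  refine le_antisymm (norm_int_le_one _) (not_lt.1 fun hlt => hij ?_)
  have := Int.eq_zero_of_abs_lt_dvd (norm_intCast_lt_one_iff.1 hlt) (by rw [abs_lt]; omega)
  omega

lemma exists_natCast_norm_sub_lt_one {z : ℚ_[p]} (hz : ‖z‖ ≤ 1) :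
    ∃ j < p, ‖z - j‖ < 1 := by
  obtain ⟨j, hjp, hj⟩ := PadicInt.exists_mem_range ⟨z, hz⟩
  rw [IsLocalRing.mem_maximalIdeal, PadicInt.mem_nonunits] at hj
  exact ⟨j, hjp, hj⟩

lemma one_lt_natCast_prime : (1 : ℝ) < p := Nat.one_lt_cast.2 hp.out.one_lt

lemma natCast_prime_pos : (0 : ℝ) < p := zero_lt_one.trans one_lt_natCast_prime

lemma closedBall_zpow_add_one_eq_iUnion (n : ℤ) :
    closedBall (0 : ℚ_[p]) ((p : ℝ) ^ (n + 1)) =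
      ⋃ j : Fin p, closedBall ((j : ℚ_[p]) * (p : ℚ_[p]) ^ (-(n + 1))) ((p : ℝ) ^ n) := by
  have hp0 : (p : ℚ_[p]) ≠ 0 := Nat.cast_ne_zero.2 hp.out.ne_zero
  have hpR : (p : ℝ) ≠ 0 := natCast_prime_pos.ne'
  ext ξ
  simp only [mem_closedBall, dist_eq_norm, sub_zero, mem_iUnion]
  constructor
  · intro hξ
    have hz : ‖(p : ℚ_[p]) ^ (n + 1) * ξ‖ ≤ 1 := by
      rw [norm_mul, norm_p_zpow, zpow_neg, inv_mul_le_one₀ (zpow_pos natCast_prime_pos _)]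
      exact hξ
    obtain ⟨j, hjp, hj⟩ := exists_natCast_norm_sub_lt_one hz
    refine ⟨⟨j, hjp⟩, ?_⟩
    have hξj : ξ - j * (p : ℚ_[p]) ^ (-(n + 1)) =
        (p : ℚ_[p]) ^ (-(n + 1)) * ((p : ℚ_[p]) ^ (n + 1) * ξ - j) := by
      rw [mul_sub, ← mul_assoc, ← zpow_add₀ hp0, neg_add_cancel, zpow_zero, one_mul, mul_comm]
    rw [hξj, norm_mul, norm_p_zpow, neg_neg]
    have := (norm_le_pow_iff_norm_lt_pow_add_one _ (-1)).2 (by simpa using hj)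
    calc (p : ℝ) ^ (n + 1) * _ ≤ (p : ℝ) ^ (n + 1) * (p : ℝ) ^ (-1 : ℤ) := by gcongr
      _ = (p : ℝ) ^ n := by rw [← zpow_add₀ hpR]; ring_nf
  · rintro ⟨j, hj⟩
    have hc : ‖(j : ℚ_[p]) * (p : ℚ_[p]) ^ (-(n + 1))‖ ≤ (p : ℝ) ^ (n + 1) := by
      rw [norm_mul, norm_p_zpow, neg_neg]
      exact mul_le_of_le_one_left (zpow_pos natCast_prime_pos _).le
        (IsUltrametricDist.norm_natCast_le_one ℚ_[p] j)
    rw [← sub_add_cancel ξ ((j : ℚ_[p]) * (p : ℚ_[p]) ^ (-(n + 1)))]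
    refine (nonarchimedean _ _).trans (max_le (hj.trans ?_) hc)
    exact zpow_le_zpow_right₀ one_lt_natCast_prime.le (Int.le_add_one le_rfl)

lemma pairwise_disjoint_closedBall_natCast_mul_zpow (n : ℤ) :
    Pairwise (Function.onFun Disjoint
      fun j : Fin p => closedBall ((j : ℚ_[p]) * (p : ℚ_[p]) ^ (-(n + 1))) ((p : ℝ) ^ n)) := by
  intro i j hij
  refine (IsUltrametricDist.closedBall_eq_or_disjoint _ _ _).resolve_left fun heq => ?_
  have hmem := heq ▸ mem_closedBall_self (zpow_pos natCast_prime_pos n).le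
  rw [mem_closedBall, dist_eq_norm, ← sub_mul, norm_mul, norm_p_zpow, neg_neg,
    norm_natCast_sub_natCast_eq_one i.2 j.2 (Fin.val_injective.ne hij), one_mul] at hmem
  exact (zpow_lt_zpow_right₀ one_lt_natCast_prime (Int.lt_succ n)).not_ge hmem

lemma natCast_rpow_lt_one {α : ℝ} (hα : 1 < α) : (p : ℝ) ^ (1 - α) < 1 :=
  Real.rpow_lt_one_of_one_lt_of_neg one_lt_natCast_prime (by linarith)

lemma natCast_rpow_div_one_sub_pos {α : ℝ} (hα : 1 < α) :
    0 < (p : ℝ) ^ (1 - α) / (1 - (p : ℝ) ^ (1 - α)) :=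
  div_pos (Real.rpow_pos_of_pos natCast_prime_pos _) (sub_pos.2 (natCast_rpow_lt_one hα))

section HaarMeasure

variable [MeasurableSpace ℚ_[p]] [BorelSpace ℚ_[p]] (μ : Measure ℚ_[p]) [μ.IsAddHaarMeasure]

lemma addHaar_closedBall_zpow_add_one (n : ℤ) :
    μ (closedBall 0 ((p : ℝ) ^ (n + 1))) = p * μ (closedBall 0 ((p : ℝ) ^ n)) := by
  rw [closedBall_zpow_add_one_eq_iUnion,
    measure_iUnion (pairwise_disjoint_closedBall_natCast_mul_zpow n)
      fun _ => measurableSet_closedBall]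
  simp [Measure.addHaar_closedBall_center]

variable {μ}

lemma addHaar_closedBall_zpow (hμ : μ (closedBall 0 1) = 1) (n : ℤ) :
    μ (closedBall 0 ((p : ℝ) ^ n)) = ENNReal.ofReal ((p : ℝ) ^ n) := by
  have hp0 : (p : ℝ) ≠ 0 := natCast_prime_pos.ne'
  induction n using Int.induction_on with
  | zero => simpa using hμ
  | succ k ih =>
    rw [addHaar_closedBall_zpow_add_one, ih, zpow_add_one₀ hp0, mul_comm, ENNReal.ofReal_mul
      (zpow_pos natCast_prime_pos _).le, ENNReal.ofReal_natCast]
  | pred k ih =>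
    have hpne : (p : ℝ≥0∞) ≠ 0 := Nat.cast_ne_zero.2 hp.out.ne_zero
    rw [← ENNReal.mul_right_inj hpne (ENNReal.natCast_ne_top p),
      ← addHaar_closedBall_zpow_add_one, sub_add_cancel, ih, ← ENNReal.ofReal_natCast,
      ← ENNReal.ofReal_mul natCast_prime_pos.le,
      ← zpow_one_add₀ hp0, add_sub_cancel]

lemma setLIntegral_sphere_norm_rpow_neg_le (hμ : μ (closedBall 0 1) = 1) (α : ℝ) (j : ℤ) :
    ∫⁻ ξ in sphere (0 : ℚ_[p]) ((p : ℝ) ^ j), ENNReal.ofReal (‖ξ‖ ^ (-α)) ∂μ ≤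
      ENNReal.ofReal (((p : ℝ) ^ j) ^ (1 - α)) := by
  have hr : 0 < (p : ℝ) ^ j := zpow_pos natCast_prime_pos j
  calc ∫⁻ ξ in sphere (0 : ℚ_[p]) ((p : ℝ) ^ j), ENNReal.ofReal (‖ξ‖ ^ (-α)) ∂μ
      = ENNReal.ofReal (((p : ℝ) ^ j) ^ (-α)) * μ (sphere 0 ((p : ℝ) ^ j)) := by
        rw [setLIntegral_congr_fun isClosed_sphere.measurableSet
          (fun ξ hξ => by rw [mem_sphere_zero_iff_norm.1 hξ]), setLIntegral_const]
    _ ≤ ENNReal.ofReal (((p : ℝ) ^ j) ^ (-α)) * ENNReal.ofReal ((p : ℝ) ^ j) := by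
        rw [← addHaar_closedBall_zpow hμ]
        gcongr
        exact sphere_subset_closedBall
    _ = ENNReal.ofReal (((p : ℝ) ^ j) ^ (1 - α)) := by
        rw [← ENNReal.ofReal_mul (by positivity), ← Real.rpow_add_one hr.ne', neg_add_eq_sub]

lemma setLIntegral_norm_rpow_neg_le (hμ : μ (closedBall 0 1) = 1) {α : ℝ} (hα : 1 < α) (m : ℤ) :
    ∫⁻ ξ in {ξ : ℚ_[p] | (p : ℝ) ^ m < ‖ξ‖}, ENNReal.ofReal (‖ξ‖ ^ (-α)) ∂μ ≤
      ENNReal.ofReal (((p : ℝ) ^ m) ^ (1 - α) *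
        ((p : ℝ) ^ (1 - α) / (1 - (p : ℝ) ^ (1 - α)))) := by
  set q := (p : ℝ) ^ (1 - α)
  have hq0 : 0 < q := Real.rpow_pos_of_pos natCast_prime_pos _
  have hq1 : q < 1 := natCast_rpow_lt_one hα
  have hcover : {ξ : ℚ_[p] | (p : ℝ) ^ m < ‖ξ‖} ⊆ ⋃ k : ℕ, sphere 0 ((p : ℝ) ^ (m + k + 1)) := by
    intro ξ hξ
    have hξ0 : ξ ≠ 0 := by
      rintro rfl
      rw [mem_ofPred_eq, norm_zero] at hξ
      exact (zpow_pos natCast_prime_pos m).not_gt hξ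
    rw [mem_ofPred_eq, norm_eq_zpow_neg_valuation hξ0,
      zpow_lt_zpow_iff_right₀ one_lt_natCast_prime] at hξ
    refine mem_iUnion.2 ⟨(-ξ.valuation - m - 1).toNat, ?_⟩
    rw [mem_sphere_zero_iff_norm, norm_eq_zpow_neg_valuation hξ0]
    congr 1
    omega
  have hterm : ∀ k : ℕ,
      ((p : ℝ) ^ (m + k + 1)) ^ (1 - α) = ((p : ℝ) ^ m) ^ (1 - α) * q * q ^ k := by
    intro k
    rw [← Real.rpow_zpow_comm natCast_prime_pos.le, ← Real.rpow_zpow_comm natCast_prime_pos.le,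
      zpow_add₀ hq0.ne', zpow_add₀ hq0.ne', zpow_natCast, zpow_one]
    ring
  calc ∫⁻ ξ in {ξ : ℚ_[p] | (p : ℝ) ^ m < ‖ξ‖}, ENNReal.ofReal (‖ξ‖ ^ (-α)) ∂μ
      ≤ ∫⁻ ξ in ⋃ k : ℕ, sphere 0 ((p : ℝ) ^ (m + k + 1)), ENNReal.ofReal (‖ξ‖ ^ (-α)) ∂μ :=
        lintegral_mono_set hcover
    _ ≤ ∑' k : ℕ, ∫⁻ ξ in sphere 0 ((p : ℝ) ^ (m + k + 1)), ENNReal.ofReal (‖ξ‖ ^ (-α)) ∂μ :=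
        lintegral_iUnion_le _ _
    _ ≤ ∑' k : ℕ, ENNReal.ofReal (((p : ℝ) ^ m) ^ (1 - α) * q * q ^ k) :=
        ENNReal.tsum_le_tsum fun k => hterm k ▸ setLIntegral_sphere_norm_rpow_neg_le hμ α _
    _ = _ := by
        rw [← ENNReal.ofReal_tsum_of_nonneg (fun k => by positivity)
          ((summable_geometric_of_lt_one hq0.le hq1).mul_left _), tsum_mul_left,
          tsum_geometric_of_lt_one hq0.le hq1, div_eq_mul_inv, mul_assoc]

lemma integrableOn_norm_rpow_neg (hμ : μ (closedBall 0 1) = 1) {α : ℝ} (hα : 1 < α) (m : ℤ) :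
    IntegrableOn (fun ξ : ℚ_[p] => ‖ξ‖ ^ (-α)) {ξ | (p : ℝ) ^ m < ‖ξ‖} μ := by
  refine (lintegral_ofReal_ne_top_iff_integrable (Measurable.aestronglyMeasurable (by fun_prop))
    (ae_of_all _ fun ξ => by positivity)).1 ?_
  exact ne_top_of_le_ne_top ENNReal.ofReal_ne_top (setLIntegral_norm_rpow_neg_le hμ hα m)

lemma setIntegral_norm_rpow_neg_le (hμ : μ (closedBall 0 1) = 1) {α : ℝ} (hα : 1 < α) (m : ℤ) :
    ∫ ξ in {ξ : ℚ_[p] | (p : ℝ) ^ m < ‖ξ‖}, ‖ξ‖ ^ (-α) ∂μ ≤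
      ((p : ℝ) ^ m) ^ (1 - α) * ((p : ℝ) ^ (1 - α) / (1 - (p : ℝ) ^ (1 - α))) := by
  rw [integral_eq_lintegral_of_nonneg_ae (ae_of_all _ fun ξ => by positivity)
    (Measurable.aestronglyMeasurable (by fun_prop))]
  refine ENNReal.toReal_le_of_le_ofReal ?_ (setLIntegral_norm_rpow_neg_le hμ hα m)
  exact mul_nonneg (Real.rpow_nonneg (zpow_pos natCast_prime_pos m).le _)
    (natCast_rpow_div_one_sub_pos hα).le

lemma integrable_one_add_norm_rpow_inv (hμ : μ (closedBall 0 1) = 1) {α : ℝ} (hα : 1 < α) :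
    Integrable (fun ξ : ℚ_[p] => (1 + ‖ξ‖ ^ α)⁻¹) μ := by
  have hsplit : closedBall (0 : ℚ_[p]) 1 ∪ {ξ | (p : ℝ) ^ (0 : ℤ) < ‖ξ‖} = univ := by
    ext ξ
    simp [le_or_gt]
  have hmeas : Measurable fun ξ : ℚ_[p] => (1 + ‖ξ‖ ^ α)⁻¹ := by fun_prop
  rw [← integrableOn_univ, ← hsplit]
  refine IntegrableOn.union ?_ ?_
  · refine Measure.integrableOn_of_bounded (M := 1) (by simp [hμ]) hmeas.aestronglyMeasurable
      (ae_of_all _ fun ξ => ?_)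
    rw [Real.norm_of_nonneg (by positivity)]
    exact inv_le_one_of_one_le₀ (le_add_of_nonneg_right (by positivity))
  · refine (integrableOn_norm_rpow_neg hμ hα 0).mono' hmeas.aestronglyMeasurable ?_
    refine (ae_restrict_iff' (measurableSet_lt measurable_const measurable_norm)).2
      (ae_of_all _ fun ξ hξ => ?_)
    rw [Real.norm_of_nonneg (by positivity)]
    exact one_add_rpow_inv_le_rpow_neg ((zpow_pos natCast_prime_pos 0).trans hξ) α

lemma integral_one_add_norm_rpow_inv_pos (hμ : μ (closedBall 0 1) = 1) {α : ℝ} (hα : 1 < α) :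
    0 < ∫ ξ : ℚ_[p], (1 + ‖ξ‖ ^ α)⁻¹ ∂μ := by
  have hsupp : Function.support (fun ξ : ℚ_[p] => (1 + ‖ξ‖ ^ α)⁻¹) = univ :=
    eq_univ_of_forall fun ξ => Function.mem_support.2 (ne_of_gt (by positivity))
  rw [integral_pos_iff_support_of_nonneg (fun ξ => by positivity)
    (integrable_one_add_norm_rpow_inv hμ hα), hsupp]
  exact isOpen_univ.measure_pos μ univ_nonempty

lemma integral_one_sub_mul_one_add_norm_rpow_inv_le (hμ : μ (closedBall 0 1) = 1) {α : ℝ}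
    (hα : 1 < α) {f : ℚ_[p] → ℝ} (hf : ∀ ξ, |f ξ| ≤ 1) (m : ℤ)
    (hfm : ∀ ξ, ‖ξ‖ ≤ (p : ℝ) ^ m → f ξ = 1) :
    ∫ ξ, (1 - f ξ) * (1 + ‖ξ‖ ^ α)⁻¹ ∂μ ≤
      2 * (((p : ℝ) ^ m) ^ (1 - α) * ((p : ℝ) ^ (1 - α) / (1 - (p : ℝ) ^ (1 - α)))) := by
  set T := {ξ : ℚ_[p] | (p : ℝ) ^ m < ‖ξ‖}
  have hT : MeasurableSet T := measurableSet_lt measurable_const measurable_norm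
  have hpt : ∀ ξ, (1 - f ξ) * (1 + ‖ξ‖ ^ α)⁻¹ ≤ 2 * T.indicator (fun ξ => ‖ξ‖ ^ (-α)) ξ := by
    intro ξ
    by_cases hξ : ξ ∈ T
    · rw [indicator_of_mem hξ]
      exact mul_le_mul (by linarith [(abs_le.1 (hf ξ)).1])
        (one_add_rpow_inv_le_rpow_neg ((zpow_pos natCast_prime_pos m).trans hξ) α)
        (by positivity) zero_le_two
    · rw [indicator_of_notMem hξ, hfm ξ (not_lt.1 hξ), sub_self, zero_mul, mul_zero]
  calc ∫ ξ, (1 - f ξ) * (1 + ‖ξ‖ ^ α)⁻¹ ∂μ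
      ≤ ∫ ξ, 2 * T.indicator (fun ξ => ‖ξ‖ ^ (-α)) ξ ∂μ :=
        integral_mono_of_nonneg
          (ae_of_all _ fun ξ => mul_nonneg (by linarith [(abs_le.1 (hf ξ)).2]) (by positivity))
          (((integrableOn_norm_rpow_neg hμ hα m).integrable_indicator hT).const_mul 2)
          (ae_of_all _ hpt)
    _ = 2 * ∫ ξ in T, ‖ξ‖ ^ (-α) ∂μ := by rw [integral_const_mul, integral_indicator hT]
    _ ≤ _ := by gcongr; exact setIntegral_norm_rpow_neg_le hμ hα m

end HaarMeasure

section Character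

variable [MeasurableSpace ℚ_[p]] [BorelSpace ℚ_[p]] {μ : Measure ℚ_[p]} [μ.IsAddHaarMeasure]
  {χ : ℚ_[p] → ℂ} {α : ℝ}

lemma integrable_character_div (hμ : μ (closedBall 0 1) = 1) (hχmeas : Measurable χ)
    (hχnorm : ∀ a, ‖χ a‖ = 1) (hα : 1 < α) (x : ℚ_[p]) :
    Integrable (fun ξ => χ (-(x * ξ)) / ((1 + ‖ξ‖ ^ α : ℝ) : ℂ)) μ := by
  refine (integrable_one_add_norm_rpow_inv hμ hα).mono'
    (Measurable.aestronglyMeasurable (by fun_prop)) (ae_of_all _ fun ξ => ?_)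
  rw [norm_div, hχnorm, Complex.norm_real, Real.norm_of_nonneg (by positivity), one_div]

lemma integrable_re_character_mul (hμ : μ (closedBall 0 1) = 1) (hχmeas : Measurable χ)
    (hχnorm : ∀ a, ‖χ a‖ = 1) (hα : 1 < α) (x : ℚ_[p]) :
    Integrable (fun ξ => (χ (-(x * ξ))).re * (1 + ‖ξ‖ ^ α)⁻¹) μ :=
  (integrable_character_div hμ hχmeas hχnorm hα x).re.congr <| ae_of_all _ fun _ =>
    Complex.div_ofReal_re _ _ |>.trans (div_eq_mul_inv _ _)

lemma re_integral_character_div (hμ : μ (closedBall 0 1) = 1) (hχmeas : Measurable χ)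
    (hχnorm : ∀ a, ‖χ a‖ = 1) (hα : 1 < α) (x : ℚ_[p]) :
    (∫ ξ, χ (-(x * ξ)) / ((1 + ‖ξ‖ ^ α : ℝ) : ℂ) ∂μ).re =
      ∫ ξ, (χ (-(x * ξ))).re * (1 + ‖ξ‖ ^ α)⁻¹ ∂μ := by
  rw [← RCLike.re_to_complex, ← integral_re (integrable_character_div hμ hχmeas hχnorm hα x)]
  refine integral_congr_ae (ae_of_all _ fun ξ => ?_)
  exact Complex.div_ofReal_re _ _ |>.trans (div_eq_mul_inv _ _)

lemma integral_one_sub_re_character_mul_le (hμ : μ (closedBall 0 1) = 1)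
    (hχnorm : ∀ a, ‖χ a‖ = 1) (hχtriv : ∀ a : ℚ_[p], ‖a‖ ≤ 1 → χ a = 1) (hα : 1 < α)
    (x : ℚ_[p]) :
    ∫ ξ, (1 - (χ (-(x * ξ))).re) * (1 + ‖ξ‖ ^ α)⁻¹ ∂μ ≤
      2 * ((p : ℝ) ^ (1 - α) / (1 - (p : ℝ) ^ (1 - α))) * ‖x‖ ^ (α - 1) := by
  rcases eq_or_ne x 0 with rfl | hx
  · simp [hχtriv 0 (by simp), Real.zero_rpow (sub_pos.2 hα).ne']
  have hxv := norm_eq_zpow_neg_valuation hx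
  have hvanish : ∀ ξ, ‖ξ‖ ≤ (p : ℝ) ^ x.valuation → (χ (-(x * ξ))).re = 1 := by
    intro ξ hξ
    have hxξ : ‖-(x * ξ)‖ ≤ 1 := by
      rw [norm_neg, norm_mul, hxv, zpow_neg]
      exact inv_mul_le_one_of_le₀ hξ (zpow_pos natCast_prime_pos _).le
    rw [hχtriv _ hxξ, Complex.one_re]
  refine (integral_one_sub_mul_one_add_norm_rpow_inv_le hμ hα
    (fun ξ => (Complex.abs_re_le_norm _).trans (hχnorm _).le) x.valuation hvanish).trans_eq ?_
  rw [hxv, zpow_neg, Real.inv_rpow (zpow_pos natCast_prime_pos _).le, ← Real.rpow_neg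
    (zpow_pos natCast_prime_pos _).le, neg_sub]
  ring

end Character

end Padic

open Padic

theorem stmt17_general (p : ℕ) [Fact p.Prime] [MeasurableSpace ℚ_[p]] [BorelSpace ℚ_[p]]
    (μ : Measure ℚ_[p]) [μ.IsAddHaarMeasure]
    (hμ : μ {x : ℚ_[p] | ‖x‖ ≤ 1} = 1)
    (χ : ℚ_[p] → ℂ) (hχmeas : Measurable χ)
    (hχnorm : ∀ a, ‖χ a‖ = 1)
    (hχtriv : ∀ a : ℚ_[p], ‖a‖ ≤ 1 → χ a = 1)
    (α : ℝ) (hα : 1 < α)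
    (g : ℚ_[p] → ℝ)
    (hg : ∀ x, g x =
      (∫ ξ : ℚ_[p], χ (-(x * ξ)) / ((1 + ‖ξ‖ ^ α : ℝ) : ℂ) ∂μ).re)
    (N : ℕ) :
    ∃ C > 0, ∀ x : ℚ_[p], ‖x‖ ≤ (p : ℝ) ^ (N : ℤ) →
      0 ≤ 1 - g x / g 0 ∧ 1 - g x / g 0 ≤ C * ‖x‖ ^ (α - 1) := by
  replace hμ : μ (closedBall 0 1) = 1 := by simpa [closedBall, dist_zero_right] using hμ
  have hgx (x : ℚ_[p]) : g x = ∫ ξ, (χ (-(x * ξ))).re * (1 + ‖ξ‖ ^ α)⁻¹ ∂μ :=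
    (hg x).trans (re_integral_character_div hμ hχmeas hχnorm hα x)
  have hg0 : 0 < g 0 := by
    simpa [hgx, hχtriv 0 (by simp)] using integral_one_add_norm_rpow_inv_pos hμ hα
  have hsub (x : ℚ_[p]) :
      g 0 - g x = ∫ ξ, (1 - (χ (-(x * ξ))).re) * (1 + ‖ξ‖ ^ α)⁻¹ ∂μ := by
    rw [hgx, hgx, ← integral_sub (integrable_re_character_mul hμ hχmeas hχnorm hα 0)
      (integrable_re_character_mul hμ hχmeas hχnorm hα x)]
    simp [hχtriv 0 (by simp), sub_mul]
  have hK := natCast_rpow_div_one_sub_pos (p := p) hα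
  refine ⟨2 * ((p : ℝ) ^ (1 - α) / (1 - (p : ℝ) ^ (1 - α))) / g 0, by positivity, fun x _ => ?_⟩
  rw [one_sub_div hg0.ne', hsub, div_mul_eq_mul_div, div_le_div_iff_of_pos_right hg0]
  refine ⟨div_nonneg (integral_nonneg fun ξ => mul_nonneg ?_ (by positivity)) hg0.le,
    integral_one_sub_re_character_mul_le hμ hχnorm hχtriv hα x⟩
  exact sub_nonneg.2 ((Complex.re_le_norm _).trans (hχnorm _).le)

/-- Lemma 3 of the paper: for every positive integer `N` there is
`C_N > 0` with `0 ≤ 1 - g¹(x)/g¹(0) ≤ C_N |x|_p^{α-1}` for all `|x|_p ≤ p^N`. -/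
theorem stmt17 (p : ℕ) [Fact p.Prime] [MeasurableSpace ℚ_[p]] [BorelSpace ℚ_[p]]
    (μ : Measure ℚ_[p]) [μ.IsAddHaarMeasure]
    (hμ : μ {x : ℚ_[p] | ‖x‖ ≤ 1} = 1)
    (χ : ℚ_[p] → ℂ) (hχmeas : Measurable χ)
    (hχnorm : ∀ a, ‖χ a‖ = 1)
    (hχadd : ∀ a b, χ (a + b) = χ a * χ b)
    (hχtriv : ∀ a : ℚ_[p], ‖a‖ ≤ 1 → χ a = 1)
    (hχnontriv : ∀ a : ℚ_[p], 1 < ‖a‖ → χ a ≠ 1)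
    (α : ℝ) (hα : 1 < α)
    (g : ℚ_[p] → ℝ)
    (hg : ∀ x, g x =
      (∫ ξ : ℚ_[p], χ (-(x * ξ)) / ((1 + ‖ξ‖ ^ α : ℝ) : ℂ) ∂μ).re)
    (N : ℕ) (hN : 0 < N) :
    ∃ C > 0, ∀ x : ℚ_[p], ‖x‖ ≤ (p : ℝ) ^ (N : ℤ) →
      0 ≤ 1 - g x / g 0 ∧ 1 - g x / g 0 ≤ C * ‖x‖ ^ (α - 1) :=
  stmt17_general p μ hμ χ hχmeas hχnorm hχtriv α hα g hg N
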